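/- arXiv:2211.05310 — 3 statements merged into one kernel-verified Lean document; each statement's English description precedes it below -/
import Mathlib

section
/- Let g : ℝ → ℝ be continuous with g(ζ) → -∞ as ζ → ∞, and let y, b ∈ W^{1,1}(0,T) satisfy y'(t) = g(y(t)) + b'(t) on [0,T] with y(0) = y⁰. Suppose there exist constants N₀ ≥ 0 and N₁ ≥ 0 such that b(t₂) - b(t₁) ≤ N₀ + N₁(t₂ - t₁) for all 0 ≤ t₁ < t₂ ≤ T, and suppose ζ̂ is a constant such that g(ζ) ≤ -N₁ for all ζ ≥ ζ̂. Then y(t) ≤ max{y⁰, ζ̂} + N₀ for all t ∈ [0,T]. -/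
open Set

/-- Zlotnik's inequality. -/
theorem zlotnik_inequality
    (T : ℝ) (hT : 0 < T) (g : ℝ → ℝ) (hg : Continuous g)
    (hginf : Filter.Tendsto g Filter.atTop Filter.atBot)
    (y b y' b' : ℝ → ℝ)
    (hy : ∀ t ∈ Icc (0:ℝ) T, HasDerivAt y (y' t) t)
    (hb : ∀ t ∈ Icc (0:ℝ) T, HasDerivAt b (b' t) t)
    (hode : ∀ t ∈ Icc (0:ℝ) T, y' t = g (y t) + b' t)
    (N₀ N₁ : ℝ) (hN₀ : 0 ≤ N₀) (hN₁ : 0 ≤ N₁)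
    (hbineq : ∀ t₁ t₂ : ℝ, 0 ≤ t₁ → t₁ < t₂ → t₂ ≤ T →
      b t₂ - b t₁ ≤ N₀ + N₁ * (t₂ - t₁))
    (ζhat : ℝ) (hζ : ∀ ζ : ℝ, ζhat ≤ ζ → g ζ ≤ -N₁) :
    ∀ t ∈ Icc (0:ℝ) T, y t ≤ max (y 0) ζhat + N₀ := by
  intro t ht
  by_contra hcon
  push_neg at hcon
  set M := max (y 0) ζhat with hM
  have hy0M : y 0 ≤ M := le_max_left _ _
  have hζM : ζhat ≤ M := le_max_right _ _
  have hytM : M < y t := lt_of_le_of_lt (le_add_of_nonneg_right hN₀) hcon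
  have hIccT : Icc (0:ℝ) t ⊆ Icc 0 T := Icc_subset_Icc le_rfl ht.2
  have hcontY : ∀ s ∈ Icc (0:ℝ) T, ContinuousAt y s := fun s hs => (hy s hs).continuousAt
  set S := {s | s ∈ Icc (0:ℝ) t ∧ y s ≤ M} with hS
  have h0S : (0:ℝ) ∈ S := ⟨⟨le_rfl, ht.1⟩, hy0M⟩
  have hSne : S.Nonempty := ⟨0, h0S⟩
  have hSbdd : BddAbove S := ⟨t, fun s hs => hs.1.2⟩
  set t₁ := sSup S with ht₁def
  have ht₁Icc : t₁ ∈ Icc (0:ℝ) t :=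
    ⟨le_csSup hSbdd h0S, csSup_le hSne fun s hs => hs.1.2⟩
  have hcl : t₁ ∈ closure S := (Real.isLUB_sSup hSne hSbdd).mem_closure hSne
  have hyt₁ : y t₁ ≤ M := by
    have hcw : ContinuousWithinAt y S t₁ :=
      (hcontY t₁ (hIccT ht₁Icc)).continuousWithinAt
    have hne : (nhdsWithin t₁ S).NeBot := mem_closure_iff_nhdsWithin_neBot.mp hcl
    exact le_of_tendsto hcw (Filter.eventually_of_mem self_mem_nhdsWithin fun s hs => hs.2)
  have ht₁t : t₁ < t := lt_of_le_of_ne ht₁Icc.2 (by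
    intro h; rw [h] at hyt₁; exact absurd hyt₁ (not_le.mpr hytM))
  have hygt : ∀ s ∈ Ioc t₁ t, M < y s := by
    intro s hs
    by_contra hle
    push_neg at hle
    have hsS : s ∈ S := ⟨⟨ht₁Icc.1.trans hs.1.le, hs.2⟩, hle⟩
    exact absurd (le_csSup hSbdd hsS) (not_le.mpr hs.1)
  have hyt₁ge : M ≤ y t₁ := by
    have hcw : ContinuousWithinAt y (Ioc t₁ t) t₁ :=
      (hcontY t₁ (hIccT ht₁Icc)).continuousWithinAt
    have hclo : t₁ ∈ closure (Ioc t₁ t) := by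
      rw [closure_Ioc ht₁t.ne]; exact ⟨le_rfl, ht₁t.le⟩
    have hne : (nhdsWithin t₁ (Ioc t₁ t)).NeBot := mem_closure_iff_nhdsWithin_neBot.mp hclo
    exact ge_of_tendsto hcw (Filter.eventually_of_mem self_mem_nhdsWithin
      fun s hs => (hygt s hs).le)
  have hζle : ∀ s ∈ Icc t₁ t, ζhat ≤ y s := by
    intro s hs
    rcases eq_or_lt_of_le hs.1 with h | h
    · rw [← h]; exact hζM.trans hyt₁ge
    · exact hζM.trans (hygt s ⟨h, hs.2⟩).le
  have hderiv : ∀ s ∈ uIcc t₁ t, HasDerivAt (fun u => y u - b u) (g (y s)) s := by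
    intro s hs
    rw [uIcc_of_le ht₁t.le] at hs
    have hsT : s ∈ Icc (0:ℝ) T := hIccT ⟨ht₁Icc.1.trans hs.1, hs.2⟩
    have h2 := (hy s hsT).sub (hb s hsT)
    rwa [hode s hsT, add_sub_cancel_right] at h2
  have hcontgy : ContinuousOn (fun s => g (y s)) (Icc t₁ t) := fun s hs =>
    ((hg.continuousAt).comp (hcontY s (hIccT ⟨ht₁Icc.1.trans hs.1, hs.2⟩))).continuousWithinAt
  have hint : IntervalIntegrable (fun s => g (y s)) MeasureTheory.volume t₁ t := by
    apply ContinuousOn.intervalIntegrable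
    rwa [uIcc_of_le ht₁t.le]
  have hFTC : (y t - b t) - (y t₁ - b t₁) = ∫ s in t₁..t, g (y s) :=
    (intervalIntegral.integral_eq_sub_of_hasDerivAt hderiv hint).symm
  have hintbound : (∫ s in t₁..t, g (y s)) ≤ ∫ _s in t₁..t, (-N₁) := by
    apply intervalIntegral.integral_mono_on ht₁t.le hint intervalIntegrable_const
    intro s hs
    exact hζ _ (hζle s hs)
  rw [intervalIntegral.integral_const, smul_eq_mul] at hintbound
  have hbb : b t - b t₁ ≤ N₀ + N₁ * (t - t₁) := hbineq t₁ t ht₁Icc.1 ht₁t ht.2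
  nlinarith [hFTC, hintbound, hbb, hyt₁, hcon]
end

section
/- Let γ > 1, α ≤ 1 (with α > 0), and let 0 < ρ_∞ < ρ̄, 0 < m_∞ < m̄. Then there exist constants C₁, C₂ ∈ (0,1), depending only on ρ̄, m̄, ρ_∞, m_∞, such that for all ρ ∈ (0, ρ̄] and m ∈ (0, m̄], C₁(m - m_∞)² + C₂(ρ - ρ_∞)² ≤ m ∫_{m_∞}^{m} (s - m_∞)/s² ds + ρ ∫_{ρ_∞}^{ρ} (s - ρ_∞)/s² ds. -/
/-!
With `E(x) = x ∫ₐˣ (s - a) / s² ds = x log (x / a) + a - x`, the inequality `log t ≤ t - 1` at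
`t = √a / √x` gives `E(x) ≥ (√x - √a)²`, and `(x - a)² = (√x - √a)² (√x + √a)² ≤ 4X (√x - √a)²`
when `a, x ≤ X`. Both far-field terms are bounded this way, with `C = 1 / (4 (X + 1)) < 1`.
-/

open Set Real

lemma integral_sub_div_sq {a x : ℝ} (ha : 0 < a) (hx : 0 < x) :
    ∫ s in a..x, (s - a) / s ^ 2 = log x - log a + a / x - 1 := by
  have hpos : ∀ s ∈ uIcc a x, 0 < s := fun s hs =>
    (lt_min ha hx).trans_le hs.1
  have hderiv : ∀ s ∈ uIcc a x, HasDerivAt (fun s => log s + a * s⁻¹) ((s - a) / s ^ 2) s := by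
    intro s hs
    have hs0 := (hpos s hs).ne'
    refine ((hasDerivAt_log hs0).add ((hasDerivAt_inv hs0).const_mul a)).congr_deriv ?_
    field_simp
    ring
  have hcont : ContinuousOn (fun s : ℝ => (s - a) / s ^ 2) (uIcc a x) :=
    ContinuousOn.div (by fun_prop) (by fun_prop) fun s hs => pow_ne_zero 2 (hpos s hs).ne'
  rw [intervalIntegral.integral_eq_sub_of_hasDerivAt hderiv hcont.intervalIntegrable]
  field_simp
  ring

lemma sq_sqrt_sub_sqrt_le {a x : ℝ} (ha : 0 < a) (hx : 0 < x) :
    (√x - √a) ^ 2 ≤ x * (log x - log a) + a - x := by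
  have hu := sqrt_pos.2 hx
  have hv := sqrt_pos.2 ha
  have hlog : log √a - log √x ≤ √a / √x - 1 := by
    simpa only [log_div hv.ne' hu.ne'] using log_le_sub_one_of_pos (div_pos hv hu)
  have hx_log : x * (log x - log a) = 2 * x * (log √x - log √a) := by
    rw [log_sqrt hx.le, log_sqrt ha.le]
    ring
  have hx_ratio : x * (√a / √x) = √x * √a := by
    field_simp
    exact (sq_sqrt hx.le).symm
  nlinarith [sq_sqrt hx.le, sq_sqrt ha.le]

lemma sq_sub_le_four_mul_sq_sqrt_sub_sqrt {a x X : ℝ} (ha : 0 ≤ a) (hx : 0 ≤ x)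
    (haX : a ≤ X) (hxX : x ≤ X) :
    (x - a) ^ 2 ≤ 4 * X * (√x - √a) ^ 2 := by
  have hfactor : (x - a) ^ 2 = (√x + √a) ^ 2 * (√x - √a) ^ 2 := by
    nth_rewrite 1 [← sq_sqrt hx, ← sq_sqrt ha]
    ring
  have hsum : (√x + √a) ^ 2 ≤ 4 * X := by
    nlinarith [sq_sqrt hx, sq_sqrt ha, sq_nonneg (√x - √a)]
  rw [hfactor]
  exact mul_le_mul_of_nonneg_right hsum (sq_nonneg _)

lemma sq_sub_le_four_mul_mul_integral {a x X : ℝ} (ha : 0 < a) (hx : 0 < x)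
    (haX : a ≤ X) (hxX : x ≤ X) :
    (x - a) ^ 2 ≤ 4 * X * (x * ∫ s in a..x, (s - a) / s ^ 2) := by
  have hentropy : x * ∫ s in a..x, (s - a) / s ^ 2 = x * (log x - log a) + a - x := by
    rw [integral_sub_div_sq ha hx]
    field_simp
  rw [hentropy]
  calc (x - a) ^ 2 ≤ 4 * X * (√x - √a) ^ 2 :=
        sq_sub_le_four_mul_sq_sqrt_sub_sqrt ha.le hx.le haX hxX
    _ ≤ 4 * X * (x * (log x - log a) + a - x) :=
        mul_le_mul_of_nonneg_left (sq_sqrt_sub_sqrt_le ha hx) (by linarith)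

lemma inv_four_mul_add_one_mul_sq_sub_le {a x X : ℝ} (ha : 0 < a) (hx : 0 < x)
    (haX : a ≤ X) (hxX : x ≤ X) :
    (4 * (X + 1))⁻¹ * (x - a) ^ 2 ≤ x * ∫ s in a..x, (s - a) / s ^ 2 := by
  have hX : 0 < X := ha.trans_le haX
  have h := sq_sub_le_four_mul_mul_integral ha hx haX hxX
  have hE : 0 ≤ x * ∫ s in a..x, (s - a) / s ^ 2 :=
    nonneg_of_mul_nonneg_right ((sq_nonneg _).trans h) (by positivity)
  rw [inv_mul_le_iff₀ (by positivity)]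
  nlinarith

lemma inv_four_mul_add_one_mem_Ioo {X : ℝ} (hX : 0 < X) : (4 * (X + 1))⁻¹ ∈ Ioo (0 : ℝ) 1 :=
  ⟨by positivity, inv_lt_one_of_one_lt₀ (by linarith)⟩

theorem energy_lower_bound_general
    (ρinf minf ρbar mbar : ℝ)
    (hρinf : 0 < ρinf) (hρ : ρinf < ρbar)
    (hminf : 0 < minf) (hm : minf < mbar) :
    ∃ C₁ C₂ : ℝ, C₁ ∈ Ioo (0:ℝ) 1 ∧ C₂ ∈ Ioo (0:ℝ) 1 ∧
      ∀ ρ m : ℝ, ρ ∈ Ioc (0:ℝ) ρbar → m ∈ Ioc (0:ℝ) mbar →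
        C₁ * (m - minf)^2 + C₂ * (ρ - ρinf)^2
          ≤ m * (∫ s in minf..m, (s - minf) / s^2)
            + ρ * (∫ s in ρinf..ρ, (s - ρinf) / s^2) := by
  refine ⟨(4 * (mbar + 1))⁻¹, (4 * (ρbar + 1))⁻¹,
    inv_four_mul_add_one_mem_Ioo (hminf.trans hm), inv_four_mul_add_one_mem_Ioo (hρinf.trans hρ),
    fun ρ m ⟨hρ0, hρle⟩ ⟨hm0, hmle⟩ => ?_⟩
  exact add_le_add (inv_four_mul_add_one_mul_sq_sub_le hminf hm0 hm.le hmle)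
    (inv_four_mul_add_one_mul_sq_sub_le hρinf hρ0 hρ.le hρle)

theorem energy_lower_bound
    (γ α ρinf minf ρbar mbar : ℝ)
    (hγ : 1 < γ) (hα0 : 0 < α) (hα : α ≤ 1)
    (hρinf : 0 < ρinf) (hρ : ρinf < ρbar)
    (hminf : 0 < minf) (hm : minf < mbar) :
    ∃ C₁ C₂ : ℝ, C₁ ∈ Ioo (0:ℝ) 1 ∧ C₂ ∈ Ioo (0:ℝ) 1 ∧
      ∀ ρ m : ℝ, ρ ∈ Ioc (0:ℝ) ρbar → m ∈ Ioc (0:ℝ) mbar →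
        C₁ * (m - minf)^2 + C₂ * (ρ - ρinf)^2
          ≤ m * (∫ s in minf..m, (s - minf) / s^2)
            + ρ * (∫ s in ρinf..ρ, (s - ρinf) / s^2) :=
  energy_lower_bound_general ρinf minf ρbar mbar hρinf hρ hminf hm
end

section
/- Suppose P : Ω̄ × [0,∞) → ℝ is continuous with P_∞ > 0 constant, there exists a continuous path x₀ : [0,∞) → Ω with P(x₀(t), t) = 0 for all t > 0, and lim_{t→∞} ‖P(·,t) − P_∞‖_{L⁴(Ω)} = 0. If, for some 3 < r < ∞ and constant C₁ > 0, there exists a sequence t_j → ∞ with ‖∇P(·, t_j)‖_{L^r(Ω)} ≤ C₁ for all j, and the interpolation inequality ‖P(·,t) − P_∞‖_{C(Ω̄)} ≤ C‖∇P(·,t)‖_{L^r}^a ‖P(·,t) − P_∞‖_{L⁴}^{1−a} holds with a = 3r/(3r + 4(r−3)) ∈ (0,1), then a contradiction follows; consequently lim_{t→∞} ‖∇P(·,t)‖_{L^r} = ∞. -/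
open MeasureTheory Filter Set
open scoped BigOperators ENNReal Topology

abbrev E3 := Fin 3 → ℝ

/-- Partial derivative in direction `i`. -/
noncomputable def pd (i : Fin 3) (f : E3 → ℝ) (x : E3) : ℝ :=
  fderiv ℝ f x (Pi.single i 1)

noncomputable def vdiv (v : E3 → E3) (x : E3) : ℝ :=
  ∑ i, pd i (fun y => v y i) x

noncomputable def vcurl (v : E3 → E3) (x : E3) : E3 :=
  ![pd 1 (fun y => v y 2) x - pd 2 (fun y => v y 1) x,
    pd 2 (fun y => v y 0) x - pd 0 (fun y => v y 2) x,
    pd 0 (fun y => v y 1) x - pd 1 (fun y => v y 0) x]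

def cross3 (a b : E3) : E3 :=
  ![a 1 * b 2 - a 2 * b 1, a 2 * b 0 - a 0 * b 2, a 0 * b 1 - a 1 * b 0]

theorem pressure_gradient_blowup
    (D : Set E3) (hD : IsOpen D) (hDne : D.Nonempty)
    (hDb : Bornology.IsBounded D)
    (Ω : Set E3) (hΩ : Ω = (closure D)ᶜ)
    (P : ℝ → E3 → ℝ) (Pinf : ℝ) (hPinf : 0 < Pinf)
    (hPc : Continuous fun q : ℝ × E3 => P q.1 q.2)
    (hPd : ∀ t > (0:ℝ), ContDiff ℝ 1 (P t))
    -- a transported vacuum point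
    (x₀ : ℝ → E3) (hx₀c : Continuous x₀)
    (hx₀ : ∀ t > (0:ℝ), x₀ t ∈ Ω ∧ P t (x₀ t) = 0)
    (r a C : ℝ) (hr : 3 < r) (ha : a = 3*r / (3*r + 4*(r - 3))) (hC : 0 < C)
    -- convergence of the pressure to the far-field value in L⁴
    (hL4 : Tendsto (fun t => (eLpNorm (fun x => P t x - Pinf)
        (ENNReal.ofReal 4) (volume.restrict Ω)).toReal) atTop (𝓝 0))
    -- Gagliardo–Nirenberg interpolation inequality (2.2)
    (hinterp : ∀ t > (0:ℝ), ∀ x ∈ closure Ω,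
      |P t x - Pinf|
        ≤ C * ((eLpNorm (fun x => fderiv ℝ (P t) x) (ENNReal.ofReal r)
              (volume.restrict Ω)).toReal) ^ a
          * ((eLpNorm (fun x => P t x - Pinf) (ENNReal.ofReal 4)
              (volume.restrict Ω)).toReal) ^ (1 - a)) :
    Tendsto (fun t => (eLpNorm (fun x => fderiv ℝ (P t) x) (ENNReal.ofReal r)
        (volume.restrict Ω)).toReal) atTop atTop := by
  set G : ℝ → ℝ := fun t => (eLpNorm (fun x => fderiv ℝ (P t) x) (ENNReal.ofReal r)
      (volume.restrict Ω)).toReal with hG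
  set L : ℝ → ℝ := fun t => (eLpNorm (fun x => P t x - Pinf) (ENNReal.ofReal 4)
      (volume.restrict Ω)).toReal with hL
  have ha0 : 0 < a := by
    rw [ha]; exact div_pos (by nlinarith) (by nlinarith)
  have ha1 : a < 1 := by
    rw [ha, div_lt_one (by nlinarith)]; nlinarith
  have h1a : 0 < 1 - a := by linarith
  have hGnn : ∀ t, 0 ≤ G t := fun t => ENNReal.toReal_nonneg
  have hLnn : ∀ t, 0 ≤ L t := fun t => ENNReal.toReal_nonneg
  -- the key inequality from the vacuum point
  have hkey : ∀ t > (0:ℝ), Pinf ≤ C * G t ^ a * L t ^ (1 - a) := by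
    intro t ht
    obtain ⟨hxm, hxP⟩ := hx₀ t ht
    have := hinterp t ht (x₀ t) (subset_closure hxm)
    rwa [hxP, zero_sub, abs_neg, abs_of_pos hPinf] at this
  have hLpos : ∀ t > (0:ℝ), 0 < L t := by
    intro t ht
    rcases lt_or_eq_of_le (hLnn t) with h | h
    · exact h
    · exfalso
      have := hkey t ht
      rw [← h, Real.zero_rpow (by linarith : (1:ℝ) - a ≠ 0), mul_zero] at this
      linarith
  -- G t ^ a ≥ Pinf * (C * L t ^ (1-a))⁻¹ for t > 0
  have hGa : ∀ᶠ t in atTop, Pinf * (C * L t ^ (1 - a))⁻¹ ≤ G t ^ a := by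
    filter_upwards [eventually_gt_atTop (0:ℝ)] with t ht
    have hLt := hLpos t ht
    have hden : 0 < C * L t ^ (1 - a) := by positivity
    rw [mul_inv_le_iff₀ hden]
    calc Pinf ≤ C * G t ^ a * L t ^ (1 - a) := hkey t ht
      _ = G t ^ a * (C * L t ^ (1 - a)) := by ring
  -- the lower bound tends to infinity
  have hden0 : Tendsto (fun t => C * L t ^ (1 - a)) atTop (𝓝[>] 0) := by
    rw [tendsto_nhdsWithin_iff]
    constructor
    · have hpow : Tendsto (fun t => L t ^ (1 - a)) atTop (𝓝 ((0:ℝ) ^ (1 - a))) :=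
        (Real.continuousAt_rpow_const 0 (1 - a) (Or.inr h1a.le)).tendsto.comp hL4
      rw [Real.zero_rpow (by linarith : (1:ℝ) - a ≠ 0)] at hpow
      simpa using hpow.const_mul C
    · filter_upwards [eventually_gt_atTop (0:ℝ)] with t ht
      have := hLpos t ht
      have : (0:ℝ) < C * L t ^ (1 - a) := by positivity
      exact this
  have hinv : Tendsto (fun t => (C * L t ^ (1 - a))⁻¹) atTop atTop :=
    hden0.inv_tendsto_nhdsGT_zero
  have hlb : Tendsto (fun t => Pinf * (C * L t ^ (1 - a))⁻¹) atTop atTop :=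
    hinv.const_mul_atTop hPinf
  have hGatop : Tendsto (fun t => G t ^ a) atTop atTop :=
    tendsto_atTop_mono' atTop hGa hlb
  have hcomp : Tendsto (fun t => (G t ^ a) ^ a⁻¹) atTop atTop :=
    (tendsto_rpow_atTop (by positivity : (0:ℝ) < a⁻¹)).comp hGatop
  have heq : (fun t => (G t ^ a) ^ a⁻¹) = G := by
    funext t
    rw [← Real.rpow_mul (hGnn t), mul_inv_cancel₀ (ne_of_gt ha0), Real.rpow_one]
  rwa [heq] at hcomp
end
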